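/- arXiv:2404.10968 — 2 statements merged into one kernel-verified Lean document; each statement's English description precedes it below -/
import Mathlib

section
/- Let k be a perfect field of characteristic p > 0, let m > 2, and let 1 < a_1 ≤ a_2 ≤ … ≤ a_{m−1} be fixed integers with (a_1, a_2) ≠ (2, 2). For each integer n ≥ a_{m−1} set f_n = x_1^{a_1} + x_2^{a_2} + … + x_{m−1}^{a_{m−1}} + x_m^n ∈ k[x_1, …, x_m]. If p ≥ a_1·a_2·(a_1 + a_2 + 1/a_1 + 1/a_2 − 4)/(a_1·a_2 − a_1 − a_2) and p ≡ −1 (mod lcm(a_1, a_2)), then either fpt(f_n) = 1 or the denominator of fpt(f_n), written in lowest terms, equals p. -/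
open MvPolynomial Filter

/-- The `q`-th Frobenius power of the maximal ideal `(x_1, …, x_m)`,
i.e. the ideal `(x_1^q, …, x_m^q)`. -/
noncomputable def frobeniusPower (k : Type*) [CommRing k] (m q : ℕ) :
    Ideal (MvPolynomial (Fin m) k) :=
  Ideal.span (Set.range fun i : Fin m => (X i : MvPolynomial (Fin m) k) ^ q)

/-- `ν_f(q) = max { N : f^N ∉ (x_1^q, …, x_m^q) }`. -/
noncomputable def nu {k : Type*} [CommRing k] {m : ℕ}
    (f : MvPolynomial (Fin m) k) (q : ℕ) : ℕ :=
  sSup {N : ℕ | f ^ N ∉ frobeniusPower k m q}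

/-!
Write `f = ∑ xᵢ ^ dᵢ`, `q = p ^ (e + 1)` and `δᵢ = ⌊(p - 1) / dᵢ⌋`. By the multinomial theorem and
Kummer's theorem, `f ^ N ∉ 𝔪^[q]` iff some `v` with `∑ vᵢ = N` adds without carrying in base `p`
and has `dᵢ vᵢ < q` for all `i`. Reading off the digit at `p ^ e` (resp. `p ^ (e + 1)`) shows this
is impossible for `N = (1 + ∑ δᵢ) p ^ e` (resp. `N = p ^ (e + 1)`). Conversely, if `d₀, d₁ ∣ p + 1`
and `d₀ + d₁ < d₀ d₁`, then `N = K p ^ e - 1` with `K = min (1 + ∑ δᵢ) p` is attained by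
`vᵢ = Dᵢ p ^ e + rᵢ`, where `Dᵢ ≤ δᵢ` sum to `K - 1` and the digits of `p ^ e - 1` are split without
carries as `r₀ = ⌊p ^ e / d₁⌋`, `r₁ = p ^ e - 1 - r₀`. Hence `ν(p ^ (e + 1)) = K p ^ e - 1`, so
`fpt f = K / p` with `1 ≤ K ≤ p`, whose denominator is `p` unless `K = p`.
-/

open Finset

-- Adding the base-`p` expansions of the `v i` produces no carry.
def AddsWithoutCarry {ι : Type*} [Fintype ι] (p : ℕ) (v : ι → ℕ) : Prop :=
  ∀ j, (∑ i, v i) / p ^ j = ∑ i, v i / p ^ j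

section Carries

variable {ι : Type*} [Fintype ι] {p : ℕ}

theorem sum_div_le_sum_div (v : ι → ℕ) (c : ℕ) : ∑ i, v i / c ≤ (∑ i, v i) / c := by
  rcases c.eq_zero_or_pos with rfl | hc
  · simp
  · rw [Nat.le_div_iff_mul_le hc, sum_mul]
    exact sum_le_sum fun i _ => Nat.div_mul_le_self _ _

theorem padicValNat_multinomial_add [Fact p.Prime] (v : ι → ℕ) {b : ℕ}
    (hb : Nat.log p (∑ i, v i) < b) :
    padicValNat p (Nat.multinomial univ v) + ∑ j ∈ Ico 1 b, ∑ i, v i / p ^ j =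
      ∑ j ∈ Ico 1 b, (∑ i, v i) / p ^ j := by
  have hfact (i : ι) : padicValNat p (v i).factorial = ∑ j ∈ Ico 1 b, v i / p ^ j :=
    padicValNat_factorial <| (Nat.log_mono_right <| single_le_sum (fun _ _ => Nat.zero_le _)
      (mem_univ i)).trans_lt hb
  have hprod : padicValNat p (∏ i, (v i).factorial) = ∑ i, padicValNat p (v i).factorial := by
    simp only [← Nat.factorization_def _ (Fact.out : p.Prime)]
    rw [Nat.factorization_prod fun i _ => Nat.factorial_ne_zero _, Finsupp.finsetSum_apply]
  rw [sum_comm, ← sum_congr rfl fun i _ => hfact i, ← hprod, add_comm,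
    ← padicValNat.mul (prod_ne_zero_iff.mpr fun i _ => Nat.factorial_ne_zero _)
      (Nat.multinomial_pos _ _).ne', Nat.multinomial_spec, padicValNat_factorial hb]

theorem not_dvd_multinomial_iff (hp : p.Prime) (v : ι → ℕ) :
    ¬ p ∣ Nat.multinomial univ v ↔ AddsWithoutCarry p v := by
  have := Fact.mk hp
  have hb := Nat.lt_succ_self (Nat.log p (∑ i, v i))
  have hval := padicValNat_multinomial_add v hb
  rw [dvd_iff_padicValNat_ne_zero (Nat.multinomial_pos _ _).ne', not_not]
  constructor
  · intro h0 j
    rw [h0, zero_add, sum_eq_sum_iff_of_le fun j _ => sum_div_le_sum_div v _] at hval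
    by_cases hj : j ∈ Ico 1 (Nat.log p (∑ i, v i) + 1)
    · exact (hval j hj).symm
    rcases j.eq_zero_or_pos with rfl | hj0
    · simp
    have hlt : ∑ i, v i < p ^ j := Nat.lt_pow_of_log_lt hp.one_lt (by simp at hj; omega)
    rw [Nat.div_eq_of_lt hlt, eq_comm, sum_eq_zero fun i _ => Nat.div_eq_of_lt <|
      (single_le_sum (fun _ _ => Nat.zero_le _) (mem_univ i)).trans_lt hlt]
  · intro h
    rw [sum_congr rfl fun j _ => h j] at hval
    omega

theorem addsWithoutCarry_of_sum_lt {v : ι → ℕ} (h : ∑ i, v i < p) : AddsWithoutCarry p v := by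
  rintro (_ | j)
  · simp
  have hlt : ∑ i, v i < p ^ (j + 1) :=
    h.trans_le (Nat.le_self_pow j.succ_ne_zero p)
  rw [Nat.div_eq_of_lt hlt, eq_comm, sum_eq_zero fun i _ => Nat.div_eq_of_lt <|
    (single_le_sum (fun _ _ => Nat.zero_le _) (mem_univ i)).trans_lt hlt]

theorem AddsWithoutCarry.mul_pow_add {D r : ι → ℕ} {e : ℕ} (hp : 0 < p)
    (hD : AddsWithoutCarry p D) (hr : AddsWithoutCarry p r) (hre : ∑ i, r i < p ^ e) :
    AddsWithoutCarry p fun i => D i * p ^ e + r i := by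
  intro j
  rcases le_or_gt j e with hj | hj
  · obtain ⟨k, rfl⟩ := Nat.exists_eq_add_of_le hj
    have hsplit (x y : ℕ) : (x * p ^ (j + k) + y) / p ^ j = x * p ^ k + y / p ^ j := by
      rw [pow_add, add_comm, ← mul_assoc, mul_right_comm, Nat.add_mul_div_right _ _ (pow_pos hp j),
        add_comm]
    simp only [sum_add_distrib, ← sum_mul, hsplit, hr j]
  · obtain ⟨k, rfl⟩ := Nat.exists_eq_add_of_lt hj
    have hri (i : ι) : r i < p ^ e :=
      (single_le_sum (fun _ _ => Nat.zero_le _) (mem_univ i)).trans_lt hre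
    have hsplit (x y : ℕ) (hy : y < p ^ e) :
        (x * p ^ e + y) / p ^ (e + k + 1) = x / p ^ (k + 1) := by
      rw [add_assoc, pow_add, ← Nat.div_div_eq_div_mul, add_comm,
        Nat.add_mul_div_right _ _ (pow_pos hp e), Nat.div_eq_of_lt hy, zero_add]
    simp only [sum_add_distrib, ← sum_mul, hsplit _ _ hre, hsplit _ _ (hri _)]
    exact hD (k + 1)

theorem mod_add_mod_lt_of_dvd {x y P : ℕ} (hP : 0 < P) (h : P ∣ x + y + 1) :
    x % P + y % P < P := by
  have hmod : x % P + y % P + 1 ≡ x + y + 1 [MOD P] :=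
    ((Nat.mod_modEq x P).add (Nat.mod_modEq y P)).add_right 1
  obtain ⟨c, hc⟩ := (Nat.modEq_zero_iff_dvd.mp (hmod.trans (Nat.modEq_zero_iff_dvd.mpr h)))
  have hx := Nat.mod_lt x hP
  have hy := Nat.mod_lt y hP
  have : c < 2 := by nlinarith
  interval_cases c <;> omega

theorem add_div_pow_eq_of_add_add_one_eq_pow {x y e : ℕ} (hp : 0 < p) (h : x + y + 1 = p ^ e)
    (j : ℕ) : (x + y) / p ^ j = x / p ^ j + y / p ^ j := by
  apply Nat.add_div_eq_of_add_mod_lt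
  rcases le_or_gt j e with hj | hj
  · exact mod_add_mod_lt_of_dvd (pow_pos hp j) (h ▸ pow_dvd_pow p hj)
  · have hlt : x + y < p ^ j := by
      have := Nat.pow_le_pow_right hp hj.le
      omega
    rwa [Nat.mod_eq_of_lt (by omega), Nat.mod_eq_of_lt (by omega)]

theorem addsWithoutCarry_single_add_single [DecidableEq ι] {i₀ i₁ : ι} (hi : i₀ ≠ i₁)
    {x y e : ℕ} (hp : 0 < p) (h : x + y + 1 = p ^ e) :
    AddsWithoutCarry p (Pi.single i₀ x + Pi.single i₁ y) := by
  have hsum (g : ℕ → ℕ) (hg : g 0 = 0) :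
      ∑ i, g ((Pi.single i₀ x + Pi.single i₁ y : ι → ℕ) i) = g x + g y := by
    rw [Fintype.sum_eq_add i₀ i₁ hi fun i hi' => by simp [hi'.1, hi'.2, hg]]
    simp [hi, hi.symm]
  intro j
  rw [show ∑ i, (Pi.single i₀ x + Pi.single i₁ y : ι → ℕ) i = x + y from hsum id rfl,
    hsum (· / p ^ j) (Nat.zero_div _)]
  exact add_div_pow_eq_of_add_add_one_eq_pow hp h j

end Carries

section FrobeniusPower

variable {R : Type*} [CommRing R] {m : ℕ}

theorem mem_frobeniusPower_iff {g : MvPolynomial (Fin m) R} {q : ℕ} :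
    g ∈ frobeniusPower R m q ↔ ∀ μ ∈ g.support, ∃ i, q ≤ μ i := by
  have hgen : Set.range (fun i : Fin m => (X i : MvPolynomial (Fin m) R) ^ q) =
      (fun μ => monomial μ 1) '' Set.range fun i => Finsupp.single i q := by
    rw [← Set.range_comp]
    simp only [Function.comp_def, X_pow_eq_monomial]
  simp [frobeniusPower, hgen, mem_ideal_span_monomial_image, Finsupp.single_le_iff]

theorem nu_eq_of_pow_notMem_of_pow_succ_mem {f : MvPolynomial (Fin m) R} {q N : ℕ}
    (hN : f ^ N ∉ frobeniusPower R m q) (hN1 : f ^ (N + 1) ∈ frobeniusPower R m q) :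
    nu f q = N := by
  refine IsGreatest.csSup_eq ⟨hN, fun M hM => ?_⟩
  by_contra! hlt
  obtain ⟨k, rfl⟩ := Nat.exists_eq_add_of_lt hlt
  change f ^ (N + k + 1) ∉ _ at hM
  rw [add_right_comm, pow_add] at hM
  exact hM (Ideal.mul_mem_right _ _ hN1)

theorem sum_X_pow_pow (d : Fin m → ℕ) (N : ℕ) :
    (∑ i, (X i : MvPolynomial (Fin m) R) ^ d i) ^ N =
      ∑ v ∈ piAntidiag univ N,
        monomial (Finsupp.equivFunOnFinite.symm (d * v)) (Nat.multinomial univ v : R) := by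
  rw [sum_pow_eq_sum_piAntidiag]
  refine sum_congr rfl fun v _ => ?_
  rw [monomial_eq, Finsupp.prod_fintype _ _ (by simp), C_eq_coe_nat]
  simp [pow_mul]

theorem coeff_sum_X_pow_pow {d : Fin m → ℕ} (hd : ∀ i, 0 < d i) {N : ℕ} {v : Fin m → ℕ}
    (hv : v ∈ piAntidiag univ N) :
    coeff (Finsupp.equivFunOnFinite.symm (d * v))
        ((∑ i, (X i : MvPolynomial (Fin m) R) ^ d i) ^ N) = Nat.multinomial univ v := by
  classical
  rw [sum_X_pow_pow, coeff_sum, sum_eq_single_of_mem v hv fun w _ hwv => ?_, coeff_monomial,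
    if_pos rfl]
  rw [coeff_monomial, if_neg]
  intro h
  refine hwv (funext fun i => Nat.eq_of_mul_eq_mul_left (hd i) ?_)
  exact congrFun (Finsupp.equivFunOnFinite.symm.injective h) i

theorem sum_X_pow_pow_mem_frobeniusPower_iff {d : Fin m → ℕ} (hd : ∀ i, 0 < d i) {N q : ℕ} :
    (∑ i, (X i : MvPolynomial (Fin m) R) ^ d i) ^ N ∈ frobeniusPower R m q ↔
      ∀ v ∈ piAntidiag univ N, (Nat.multinomial univ v : R) ≠ 0 → ∃ i, q ≤ d i * v i := by
  classical
  rw [mem_frobeniusPower_iff]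
  constructor
  · intro h v hv hv0
    exact h _ (mem_support_iff.mpr (by rwa [coeff_sum_X_pow_pow hd hv]))
  · intro h μ hμ
    rw [sum_X_pow_pow] at hμ
    obtain ⟨v, hv, hμv⟩ := mem_biUnion.mp (support_sum hμ)
    rw [support_monomial] at hμv
    split_ifs at hμv with hv0
    · simp at hμv
    · rw [mem_singleton.mp hμv]
      exact h v hv hv0

end FrobeniusPower

theorem exists_le_and_sum_eq {ι : Type*} [Fintype ι] (f : ι → ℕ) {c : ℕ} (h : c ≤ ∑ i, f i) :
    ∃ g : ι → ℕ, g ≤ f ∧ ∑ i, g i = c := by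
  classical
  induction c with
  | zero => exact ⟨0, fun i => Nat.zero_le _, by simp⟩
  | succ c ih =>
    obtain ⟨g, hgf, hg⟩ := ih (by omega)
    obtain ⟨i, -, hi⟩ : ∃ i ∈ univ, g i < f i := exists_lt_of_sum_lt (by omega)
    refine ⟨Function.update g i (g i + 1), fun j => ?_, ?_⟩
    · rcases eq_or_ne j i with rfl | hj
      · simpa using hi
      · simpa [hj] using hgf j
    · rw [sum_update_of_mem (mem_univ i), ← hg, sum_eq_sum_sdiff_singleton_add (mem_univ i) g]
      omega

theorem mul_div_add_self_eq_of_dvd {d n : ℕ} (hd : 2 ≤ d) (h : d ∣ n + 1) :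
    d * ((n - 1) / d) + d = n + 1 := by
  obtain ⟨u, hu⟩ := h
  obtain ⟨w, rfl⟩ : ∃ w, u = w + 1 := Nat.exists_eq_succ_of_ne_zero (by rintro rfl; omega)
  rw [mul_add_one] at hu
  have hq : (n - 1) / d = w :=
    Nat.div_eq_of_lt_le (by rw [mul_comm]; omega) (by rw [add_one_mul, mul_comm]; omega)
  rw [hq, hu]

theorem mul_mul_add_lt_of_le_div {p d D P r : ℕ} (hD : D ≤ (p - 1) / d)
    (hr : d * r < (p - d * ((p - 1) / d)) * P) : d * (D * P + r) < p * P := by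
  have hδ : d * ((p - 1) / d) ≤ p - 1 := Nat.mul_div_le _ _
  have hdD : d * D * P ≤ d * ((p - 1) / d) * P :=
    Nat.mul_le_mul_right _ (Nat.mul_le_mul_left _ hD)
  rw [Nat.sub_mul] at hr
  have : d * ((p - 1) / d) * P ≤ p * P := Nat.mul_le_mul_right _ (by omega)
  rw [mul_add, ← mul_assoc]
  omega

theorem mul_div_lt_sub_one_mul {s t P : ℕ} (hst : s + t < s * t) (hP : 0 < P) :
    s * (P / t) < (s - 1) * P := by
  have ht : 0 < t := by rcases t.eq_zero_or_pos with rfl | h <;> simp_all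
  refine Nat.lt_of_mul_lt_mul_left (a := t) ?_
  calc t * (s * (P / t)) = s * (t * (P / t)) := by ring
    _ ≤ s * P := Nat.mul_le_mul_left _ (Nat.mul_div_le _ _)
    _ < t * ((s - 1) * P) := by
      rw [← mul_assoc, Nat.mul_sub_one]
      exact Nat.mul_lt_mul_of_pos_right (by rw [mul_comm t s]; omega) hP

theorem mul_sub_div_lt_sub_one_mul {t P : ℕ} (ht : 2 ≤ t) (hP : 0 < P) :
    t * (P - 1 - P / t) < (t - 1) * P := by
  have h := Nat.lt_mul_div_succ P (by omega : 0 < t)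
  have h2 : 2 * P ≤ t * P := Nat.mul_le_mul_right P ht
  rw [mul_add_one] at h
  rw [Nat.mul_sub, Nat.mul_sub, Nat.sub_one_mul, mul_one]
  omega

section Witness

variable {ι : Type*} [DecidableEq ι] {p : ℕ} {d : ι → ℕ} {i₀ i₁ : ι}

theorem mul_mul_add_single_add_single_lt (hi : i₀ ≠ i₁) (h₀ : d i₀ ∣ p + 1)
    (h₁ : d i₁ ∣ p + 1) (hst : d i₀ + d i₁ < d i₀ * d i₁) {P D : ℕ} (hP : 0 < P) {i : ι}
    (hD : D ≤ (p - 1) / d i) :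
    d i * (D * P + (Pi.single i₀ (P / d i₁) + Pi.single i₁ (P - 1 - P / d i₁) : ι → ℕ) i) <
      p * P := by
  refine mul_mul_add_lt_of_le_div hD ?_
  have hs : 2 ≤ d i₀ := by nlinarith
  have ht : 2 ≤ d i₁ := by nlinarith
  have hδ (j : ι) (hj : 2 ≤ d j) (hdvd : d j ∣ p + 1) : p - d j * ((p - 1) / d j) = d j - 1 := by
    have := mul_div_add_self_eq_of_dvd hj hdvd
    omega
  by_cases hi₀ : i = i₀
  · subst hi₀
    simpa [hi, hδ _ hs h₀] using mul_div_lt_sub_one_mul hst hP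
  by_cases hi₁ : i = i₁
  · subst hi₁
    simpa [Ne.symm hi, hδ _ ht h₁] using mul_sub_div_lt_sub_one_mul ht hP
  have hp : 2 ≤ p + 1 := hs.trans (Nat.le_of_dvd p.succ_pos h₀)
  have : d i * ((p - 1) / d i) ≤ p - 1 := Nat.mul_div_le _ _
  simp only [Pi.add_apply, Pi.single_apply, hi₀, hi₁, if_false, add_zero, mul_zero]
  exact Nat.mul_pos (by omega) hP

theorem exists_addsWithoutCarry_sum_eq_mul_pow_sub_one [Fintype ι] (hp : p.Prime) (hi : i₀ ≠ i₁)
    (h₀ : d i₀ ∣ p + 1) (h₁ : d i₁ ∣ p + 1) (hst : d i₀ + d i₁ < d i₀ * d i₁) (e : ℕ) :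
    ∃ v : ι → ℕ, ∑ i, v i = min (1 + ∑ i, (p - 1) / d i) p * p ^ e - 1 ∧
      AddsWithoutCarry p v ∧ ∀ i, d i * v i < p ^ (e + 1) := by
  set K := min (1 + ∑ i, (p - 1) / d i) p
  set P := p ^ e
  have hK1 : 1 ≤ K := le_min (by omega) hp.one_lt.le
  have hKp : K ≤ p := min_le_right _ _
  have hKP : P ≤ K * P := Nat.le_mul_of_pos_left P hK1
  have hP : 0 < P := pow_pos hp.pos e
  have ht : 2 ≤ d i₁ := by nlinarith
  obtain ⟨D, hDle, hDsum⟩ := exists_le_and_sum_eq (fun i => (p - 1) / d i) (c := K - 1)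
    (by have := min_le_left (1 + ∑ i, (p - 1) / d i) p; omega)
  set r : ι → ℕ := Pi.single i₀ (P / d i₁) + Pi.single i₁ (P - 1 - P / d i₁) with hr
  have hrP : P / d i₁ + (P - 1 - P / d i₁) + 1 = P := by
    have := Nat.div_lt_self hP (by omega : 1 < d i₁)
    omega
  have hrsum : ∑ i, r i = P - 1 := by
    simp only [hr, Pi.add_apply, sum_add_distrib, Fintype.sum_pi_single']
    omega
  refine ⟨fun i => D i * P + r i, ?_, ?_, fun i => ?_⟩
  · rw [sum_add_distrib, ← sum_mul, hDsum, hrsum, Nat.sub_one_mul]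
    omega
  · exact (addsWithoutCarry_of_sum_lt (by omega)).mul_pow_add hp.pos
      (addsWithoutCarry_single_add_single hi hp.pos hrP) (by omega)
  · rw [pow_succ']
    exact mul_mul_add_single_add_single_lt hi h₀ h₁ hst hP (hDle i)

end Witness

section Diagonal

variable {R : Type*} [CommRing R] {p m : ℕ} [CharP R p] {d : Fin m → ℕ}

theorem sum_X_pow_pow_mem_frobeniusPower_iff_addsWithoutCarry (hp : p.Prime)
    (hd : ∀ i, 0 < d i) {N q : ℕ} :
    (∑ i, (X i : MvPolynomial (Fin m) R) ^ d i) ^ N ∈ frobeniusPower R m q ↔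
      ∀ v ∈ piAntidiag univ N, AddsWithoutCarry p v → ∃ i, q ≤ d i * v i := by
  simp_rw [sum_X_pow_pow_mem_frobeniusPower_iff hd, Ne, CharP.cast_eq_zero_iff R p,
    not_dvd_multinomial_iff hp]

theorem sum_X_pow_pow_char_pow_mem_frobeniusPower (hp : p.Prime) (hd : ∀ i, 0 < d i) (e : ℕ) :
    (∑ i, (X i : MvPolynomial (Fin m) R) ^ d i) ^ (p * p ^ e) ∈
      frobeniusPower R m (p ^ (e + 1)) := by
  rw [sum_X_pow_pow_mem_frobeniusPower_iff_addsWithoutCarry hp hd]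
  intro v hv hcarry
  have hsum : ∑ i, v i = p ^ (e + 1) := by rw [(mem_piAntidiag.mp hv).1, pow_succ']
  obtain ⟨i, -, hi⟩ : ∃ i ∈ univ, 0 < v i / p ^ (e + 1) := by
    refine exists_lt_of_sum_lt ?_
    rw [sum_const_zero, ← hcarry, hsum, Nat.div_self (pow_pos hp.pos _)]
    exact one_pos
  exact ⟨i, (Nat.div_pos_iff.mp hi).2.trans (Nat.le_mul_of_pos_left _ (hd i))⟩

theorem sum_X_pow_pow_one_add_mem_frobeniusPower (hp : p.Prime) (hd : ∀ i, 0 < d i) (e : ℕ) :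
    (∑ i, (X i : MvPolynomial (Fin m) R) ^ d i) ^ ((1 + ∑ i, (p - 1) / d i) * p ^ e) ∈
      frobeniusPower R m (p ^ (e + 1)) := by
  rw [sum_X_pow_pow_mem_frobeniusPower_iff_addsWithoutCarry hp hd]
  intro v hv hcarry
  obtain ⟨i, -, hi⟩ : ∃ i ∈ univ, (p - 1) / d i < v i / p ^ e := by
    refine exists_lt_of_sum_lt ?_
    rw [← hcarry, (mem_piAntidiag.mp hv).1, Nat.mul_div_cancel _ (pow_pos hp.pos _)]
    omega
  rw [Nat.div_lt_iff_lt_mul (hd i)] at hi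
  refine ⟨i, ?_⟩
  calc p ^ (e + 1) = p * p ^ e := pow_succ' ..
    _ ≤ v i / p ^ e * d i * p ^ e := Nat.mul_le_mul_right _ (by omega)
    _ = d i * (v i / p ^ e * p ^ e) := by ring
    _ ≤ d i * v i := Nat.mul_le_mul_left _ (Nat.div_mul_le_self _ _)

theorem sum_X_pow_pow_notMem_frobeniusPower (hp : p.Prime) (hd : ∀ i, 0 < d i)
    {i₀ i₁ : Fin m} (hi : i₀ ≠ i₁) (h₀ : d i₀ ∣ p + 1) (h₁ : d i₁ ∣ p + 1)
    (hst : d i₀ + d i₁ < d i₀ * d i₁) (e : ℕ) :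
    (∑ i, (X i : MvPolynomial (Fin m) R) ^ d i) ^ (min (1 + ∑ i, (p - 1) / d i) p * p ^ e - 1) ∉
      frobeniusPower R m (p ^ (e + 1)) := by
  rw [sum_X_pow_pow_mem_frobeniusPower_iff_addsWithoutCarry hp hd]
  push Not
  obtain ⟨v, hsum, hcarry, hlt⟩ := exists_addsWithoutCarry_sum_eq_mul_pow_sub_one hp hi h₀ h₁ hst e
  exact ⟨v, mem_piAntidiag.mpr ⟨hsum, by simp⟩, hcarry, hlt⟩

theorem nu_sum_X_pow {R : Type*} [CommRing R] {p m : ℕ} [CharP R p] {d : Fin m → ℕ}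
    (hp : p.Prime) (hd : ∀ i, 0 < d i) {i₀ i₁ : Fin m} (hi : i₀ ≠ i₁) (h₀ : d i₀ ∣ p + 1)
    (h₁ : d i₁ ∣ p + 1) (hst : d i₀ + d i₁ < d i₀ * d i₁) (e : ℕ) :
    nu (∑ i, (X i : MvPolynomial (Fin m) R) ^ d i) (p ^ (e + 1)) =
      min (1 + ∑ i, (p - 1) / d i) p * p ^ e - 1 := by
  refine nu_eq_of_pow_notMem_of_pow_succ_mem
    (sum_X_pow_pow_notMem_frobeniusPower hp hd hi h₀ h₁ hst e) ?_
  rw [Nat.sub_add_cancel (Nat.mul_pos (lt_min (by omega) hp.pos) (pow_pos hp.pos e))]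
  rcases min_choice (1 + ∑ i, (p - 1) / d i) p with h | h <;> rw [h]
  exacts [sum_X_pow_pow_one_add_mem_frobeniusPower hp hd e,
    sum_X_pow_pow_char_pow_mem_frobeniusPower hp hd e]

end Diagonal

theorem tendsto_mul_pow_sub_one_div_pow_succ {p c : ℕ} (hp : 1 < p) (hc : 0 < c) :
    Tendsto (fun e : ℕ => ((c * p ^ e - 1 : ℕ) : ℝ) / (p : ℝ) ^ (e + 1)) atTop
      (nhds ((c : ℝ) / p)) := by
  have hp0 : (0 : ℝ) < p := by positivity
  have hform (e : ℕ) :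
      ((c * p ^ e - 1 : ℕ) : ℝ) / (p : ℝ) ^ (e + 1) = c / p - (p : ℝ)⁻¹ ^ (e + 1) := by
    rw [Nat.cast_sub (Nat.one_le_iff_ne_zero.mpr (by positivity)), inv_pow, sub_div, pow_succ]
    push_cast
    field_simp
  simp_rw [hform]
  have hpow := (tendsto_pow_atTop_nhds_zero_of_lt_one (r := (p : ℝ)⁻¹) (by positivity)
    (inv_lt_one_of_one_lt₀ (by exact_mod_cast hp))).comp (tendsto_add_atTop_nat 1)
  simpa using tendsto_const_nhds.sub hpow

theorem den_natCast_div_of_lt_prime {p K : ℕ} (hp : p.Prime) (hK0 : 0 < K) (hKp : K < p) :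
    ((K : ℚ) / p).den = p := by
  have hcop : Nat.Coprime K p :=
    ((Nat.Prime.coprime_iff_not_dvd hp).mpr (Nat.not_dvd_of_pos_of_lt hK0 hKp)).symm
  simpa using Rat.den_div_eq_of_coprime (a := K) (b := p) (by exact_mod_cast hp.pos)
    (by simpa using hcop)

theorem eq_one_or_den_eq_of_tendsto {p K : ℕ} {F : ℚ} (hp : p.Prime) (hK0 : 0 < K)
    (hKp : K ≤ p)
    (hF : Tendsto (fun e : ℕ => ((K * p ^ e - 1 : ℕ) : ℝ) / (p : ℝ) ^ (e + 1)) atTop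
      (nhds (F : ℝ))) :
    F = 1 ∨ F.den = p := by
  have hFK : F = K / p := by
    apply Rat.cast_injective (α := ℝ)
    push_cast
    exact tendsto_nhds_unique hF (tendsto_mul_pow_sub_one_div_pow_succ hp.one_lt hK0)
  rcases hKp.lt_or_eq with hlt | rfl
  · exact .inr (hFK ▸ den_natCast_div_of_lt_prime hp hK0 hlt)
  · exact .inl (by rw [hFK, div_self (by exact_mod_cast hp.ne_zero)])

theorem add_lt_mul_of_two_le {s t : ℕ} (hs : 2 ≤ s) (ht : 2 ≤ t) (hst : ¬(s = 2 ∧ t = 2)) :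
    s + t < s * t := by
  have : 5 ≤ s + t := by omega
  nlinarith

theorem stmt0_general {p m n : ℕ} (hp : p.Prime) {k : Type*} [Field k]
    [CharP k p] (hm : 2 < m) (a : ℕ → ℕ)
    (ha0 : 1 < a 0)
    (hmono : ∀ i j : ℕ, i ≤ j → j ≤ m - 2 → a i ≤ a j)
    (hne : ¬(a 0 = 2 ∧ a 1 = 2))
    (hn : a (m - 2) ≤ n)
    (hpmod : (p : ℤ) ≡ -1 [ZMOD (Nat.lcm (a 0) (a 1) : ℤ)])
    (F : ℚ)
    (hF : Tendsto (fun e : ℕ =>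
        (nu (∑ i : Fin m, (X i : MvPolynomial (Fin m) k) ^
            (if (i : ℕ) = m - 1 then n else a (i : ℕ))) (p ^ (e + 1)) : ℝ) /
          (p : ℝ) ^ (e + 1))
      atTop (nhds (F : ℝ))) :
    F = 1 ∨ F.den = p := by
  set d : Fin m → ℕ := fun i => if (i : ℕ) = m - 1 then n else a i
  have hd (i : Fin m) : 0 < d i := by
    have := hmono 0 (m - 2) (Nat.zero_le _) le_rfl
    have := hmono 0 i (Nat.zero_le _)
    simp only [d]
    split_ifs <;> omega
  have hd₀ : d ⟨0, by omega⟩ = a 0 := if_neg (by simp; omega)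
  have hd₁ : d ⟨1, by omega⟩ = a 1 := if_neg (by simp; omega)
  have hlcm : Nat.lcm (a 0) (a 1) ∣ p + 1 := by
    have := hpmod.symm.dvd
    rw [sub_neg_eq_add] at this
    exact_mod_cast this
  have hst := add_lt_mul_of_two_le ha0 (ha0.trans_le (hmono 0 1 (by omega) (by omega))) hne
  have hnu := nu_sum_X_pow (R := k) hp hd (i₀ := ⟨0, by omega⟩) (i₁ := ⟨1, by omega⟩)
    (by simp) (hd₀ ▸ (Nat.dvd_lcm_left _ _).trans hlcm) (hd₁ ▸ (Nat.dvd_lcm_right _ _).trans hlcm)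
    (by rwa [hd₀, hd₁])
  refine eq_one_or_den_eq_of_tendsto (K := min (1 + ∑ i, (p - 1) / d i) p) hp
    (lt_min (by omega) hp.pos) (min_le_right _ _) (hF.congr fun e => ?_)
  exact congrArg (fun N : ℕ => (N : ℝ) / (p : ℝ) ^ (e + 1)) (hnu e)

/-- Theorem (stability of denominators): for the family of diagonal hypersurfaces
`f_n = x_1^{a_1} + … + x_{m-1}^{a_{m-1}} + x_m^n`, if
`p ≥ a_1 a_2 (a_1 + a_2 + 1/a_1 + 1/a_2 - 4)/(a_1 a_2 - a_1 - a_2)` and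
`p ≡ -1 (mod lcm(a_1, a_2))`, then either `fpt(f_n) = 1` or the denominator of
`fpt(f_n)` in lowest terms equals `p`.  (The indices of the exponents are shifted:
`a 0 = a_1`, etc.)  The F-pure threshold `F = fpt(f_n)` is characterized as the
limit of `ν_{f_n}(p^e)/p^e` as `e → ∞`. -/
theorem stmt0 {p m n : ℕ} (hp : p.Prime) {k : Type*} [Field k] [PerfectField k]
    [CharP k p] (hm : 2 < m) (a : ℕ → ℕ)
    (ha0 : 1 < a 0)
    (hmono : ∀ i j : ℕ, i ≤ j → j ≤ m - 2 → a i ≤ a j)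
    (hne : ¬(a 0 = 2 ∧ a 1 = 2))
    (hn : a (m - 2) ≤ n)
    (hpge : ((a 0 : ℚ) * a 1 * ((a 0 : ℚ) + (a 1 : ℚ) + 1 / (a 0 : ℚ) + 1 / (a 1 : ℚ) - 4)) /
        ((a 0 : ℚ) * (a 1 : ℚ) - (a 0 : ℚ) - (a 1 : ℚ)) ≤ (p : ℚ))
    (hpmod : (p : ℤ) ≡ -1 [ZMOD (Nat.lcm (a 0) (a 1) : ℤ)])
    (F : ℚ)
    (hF : Tendsto (fun e : ℕ =>
        (nu (∑ i : Fin m, (X i : MvPolynomial (Fin m) k) ^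
            (if (i : ℕ) = m - 1 then n else a (i : ℕ))) (p ^ (e + 1)) : ℝ) /
          (p : ℝ) ^ (e + 1))
      atTop (nhds (F : ℝ))) :
    F = 1 ∨ F.den = p :=
  stmt0_general hp hm a ha0 hmono hne hn hpmod F hF
end

section
/- Let k be a perfect field of characteristic p > 0, let m > 2, and let 1 < a ≤ b be fixed integers with (a, b) ≠ (2, 2). For an integer n ≥ b set f_n = x_1^a + x_2^b + x_3^n + x_4^n + … + x_m^n ∈ k[x_1, …, x_m]. If p ≡ 1 (mod lcm(a, b)), p^d ≤ n < p^{d+1} for some positive integer d, and fpt(f_n) ≠ 1/a + 1/b + (m−2)/n, then the power of p in the denominator of fpt(f_n), written in lowest terms, is at least d. -/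
/-!
By Kummer's theorem, `f^N ∉ 𝔪^[p^e]` for `f = ∑ x_i^{w_i}` exactly when `N = ∑ κ_i` with
`w_i κ_i < p^e` and the base-`p` addition of the `κ_i` carry-free; so `ν_f(p^e)` is the largest such
sum. The largest allowed `κ_i` is `⌊(p^e - 1)/w_i⌋`, the first `e` base-`p` digits of `1/w_i`.
For `w ∣ p - 1` all these digits equal `(p - 1)/w`; for `w = n ≥ p^d` the first `d` digits vanish.

If the digit sums of the caps never reach `p`, the caps themselves are carry-free and
`fpt(f) = ∑ 1/w_i`. Otherwise, at the first place `s` where a digit sum reaches `p`, one gets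
`ν_f(p^(s+σ)) + 1 = p^σ K` with `K = ∑ ⌊(p^s - 1)/w_i⌋ + 1`, hence `fpt(f) = K/p^s`. Passing
from `s` to `s + 1` multiplies `K` by `p` and subtracts `p - 1` minus the digit sum, so `p^t ∣ K`
forces the last `t` digit sums before `s` to be `p - 1`. The digit sums in the first `d` places are
`(p - 1)/a + (p - 1)/b < p - 1`, whence `v_p(K) ≤ s - d`.
-/

open MvPolynomial Filter

open Finset

theorem Nat.Prime.not_dvd_choose_add_iff {p : ℕ} (hp : p.Prime) (x y : ℕ) :
    ¬ p ∣ (x + y).choose x ↔ ∀ t, x % p ^ t + y % p ^ t < p ^ t := by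
  have := Fact.mk hp
  rw [dvd_iff_padicValNat_ne_zero (Nat.choose_pos (Nat.le_add_right x y)).ne', not_not,
    Nat.add_comm x y, padicValNat_choose' (Nat.lt_succ_self _), Finset.card_eq_zero,
    filter_eq_empty_iff]
  refine ⟨fun h t => ?_, fun h t _ => (h t).not_ge⟩
  by_contra! hcarry
  rcases Nat.eq_zero_or_pos t with rfl | ht
  · simp [Nat.mod_one] at hcarry
  by_cases hlog : t ≤ Nat.log p (y + x)
  · exact h (mem_Ico.2 ⟨ht, Nat.lt_succ_of_le hlog⟩) hcarry
  · have hlt : y + x < p ^ t := (Nat.lt_pow_succ_log_self hp.one_lt _).trans_le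
      (Nat.pow_le_pow_right hp.pos (not_le.1 hlog))
    have := Nat.mod_le x (p ^ t)
    have := Nat.mod_le y (p ^ t)
    omega

theorem Nat.Prime.not_dvd_multinomial_iff {p : ℕ} (hp : p.Prime) {ι : Type*} (s : Finset ι)
    (κ : ι → ℕ) : ¬ p ∣ Nat.multinomial s κ ↔ ∀ t, ∑ i ∈ s, κ i % p ^ t < p ^ t := by
  induction s using Finset.cons_induction with
  | empty => simp [hp.ne_one, hp.pos]
  | cons a s ha ih =>
    have sum_mod : ∀ t, ∑ i ∈ s, κ i % p ^ t < p ^ t →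
        (∑ i ∈ s, κ i) % p ^ t = ∑ i ∈ s, κ i % p ^ t := fun t h => by
      rw [sum_nat_mod, Nat.mod_eq_of_lt h]
    rw [Nat.multinomial_cons, hp.dvd_mul, not_or, ih, hp.not_dvd_choose_add_iff]
    simp only [sum_cons]
    constructor
    · rintro ⟨hchoose, hs⟩ t
      rw [← sum_mod t (hs t)]
      exact hchoose t
    · intro h
      have hs : ∀ t, ∑ i ∈ s, κ i % p ^ t < p ^ t := fun t => (Nat.le_add_left _ _).trans_lt (h t)
      exact ⟨fun t => by rw [sum_mod t (hs t)]; exact h t, hs⟩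

namespace DiagonalFPT

section CarryFree

variable {ι : Type*} [Fintype ι] {p : ℕ}

def IsCarryFree (p : ℕ) (κ : ι → ℕ) : Prop := ∀ t, ∑ i, κ i % p ^ t < p ^ t

lemma isCarryFree_of_sum_lt {κ : ι → ℕ} (h : ∑ i, κ i < p) : IsCarryFree p κ := by
  intro t
  rcases Nat.eq_zero_or_pos t with rfl | ht
  · simp [Nat.mod_one]
  · calc ∑ i, κ i % p ^ t ≤ ∑ i, κ i := sum_le_sum fun i _ => Nat.mod_le _ _
      _ < p := h
      _ ≤ p ^ t := Nat.le_self_pow ht.ne' p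

lemma isCarryFree_single [DecidableEq ι] (hp : 0 < p) (i : ι) (c : ℕ) :
    IsCarryFree p (Pi.single i c) := by
  intro t
  rw [Fintype.sum_eq_single i fun j hj => by simp [hj]]
  simpa using Nat.mod_lt c (pow_pos hp t)

lemma IsCarryFree.pow_mul_add {h l : ι → ℕ} {σ : ℕ} (hh : IsCarryFree p h)
    (hl : IsCarryFree p l) (hlσ : ∑ i, l i < p ^ σ) :
    IsCarryFree p fun i => p ^ σ * h i + l i := by
  intro t
  rcases le_or_gt t σ with htσ | hσt
  · obtain ⟨c, hc⟩ := pow_dvd_pow p htσ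
    simp only [hc, mul_assoc, Nat.mul_add_mod]
    exact hl t
  obtain ⟨u, rfl⟩ : ∃ u, t = σ + u := ⟨t - σ, by omega⟩
  have hpσ : 0 < p ^ σ := Nat.pos_of_ne_zero fun h0 => by simp [h0] at hlσ
  have hl_lt : ∀ i, l i < p ^ σ := fun i =>
    (single_le_sum (fun j _ => Nat.zero_le (l j)) (mem_univ i)).trans_lt hlσ
  have hsplit : ∀ i, (p ^ σ * h i + l i) % p ^ (σ + u) = l i + p ^ σ * (h i % p ^ u) := fun i => by
    rw [pow_add, Nat.mod_mul, Nat.mul_add_mod, Nat.mod_eq_of_lt (hl_lt i), Nat.mul_add_div hpσ,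
      Nat.div_eq_of_lt (hl_lt i), add_zero]
  simp only [hsplit, sum_add_distrib, ← mul_sum]
  have hhu := Nat.mul_le_mul_left (p ^ σ) (Nat.succ_le_of_lt (hh u))
  rw [Nat.mul_succ, ← pow_add] at hhu
  omega

end CarryFree

section Cap

def cap (p w e : ℕ) : ℕ := (p ^ e - 1) / w

/-- The `(j+1)`-st base-`p` digit of `1/w`. -/
def capDigit (p w j : ℕ) : ℕ := cap p w (j + 1) % p

def digitSum {ι : Type*} [Fintype ι] (p : ℕ) (w : ι → ℕ) (j : ℕ) : ℕ := ∑ i, capDigit p (w i) j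

variable {p w : ℕ}

lemma mul_lt_pow_iff_le_cap (hp : 0 < p) (hw : 0 < w) {κ e : ℕ} :
    w * κ < p ^ e ↔ κ ≤ cap p w e := by
  rw [cap, Nat.le_div_iff_mul_le hw, mul_comm]
  have := pow_pos hp e
  omega

@[simp] lemma cap_zero : cap p w 0 = 0 := by simp [cap]

lemma cap_eq_zero {e : ℕ} (h : p ^ e ≤ w) : cap p w e = 0 :=
  Nat.div_eq_zero_iff.2 (by omega)

lemma cap_add_div_pow (hp : 0 < p) (s σ : ℕ) : cap p w (s + σ) / p ^ σ = cap p w s := by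
  have h₁ : 1 ≤ p ^ s := Nat.one_le_pow _ _ hp
  have h₂ : 1 ≤ p ^ σ := Nat.one_le_pow _ _ hp
  have hsplit : p ^ (s + σ) - 1 = p ^ σ * (p ^ s - 1) + (p ^ σ - 1) := by
    have : 1 ≤ p ^ s * p ^ σ := Nat.mul_le_mul h₁ h₂
    rw [pow_add]
    zify [h₁, h₂, this]
    ring
  rw [cap, cap, Nat.div_div_eq_div_mul, Nat.mul_comm w, ← Nat.div_div_eq_div_mul, hsplit,
    Nat.mul_add_div h₂, Nat.div_eq_of_lt (Nat.sub_lt h₂ Nat.one_pos), add_zero]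

lemma pow_mul_cap_le (hp : 0 < p) (s σ : ℕ) : p ^ σ * cap p w s ≤ cap p w (s + σ) := by
  rw [← cap_add_div_pow hp s σ]
  exact Nat.mul_div_le _ _

lemma cap_succ (hp : 0 < p) (j : ℕ) : cap p w (j + 1) = p * cap p w j + capDigit p w j := by
  rw [capDigit, ← cap_add_div_pow hp j 1, pow_one, Nat.div_add_mod]

lemma capDigit_of_dvd (hp : 0 < p) (hw : w ∣ p - 1) (j : ℕ) : capDigit p w j = (p - 1) / w := by
  rcases Nat.eq_zero_or_pos w with rfl | hw₀
  · simp [capDigit, cap]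
  have hcap : ∀ e, w * cap p w e = p ^ e - 1 := fun e =>
    Nat.mul_div_cancel' (hw.trans (Nat.sub_one_dvd_pow_sub_one p e))
  have h := congrArg (w * ·) (cap_succ (w := w) hp j)
  simp only [mul_add, mul_left_comm w p, hcap, pow_succ'] at h
  have : p ≤ p * p ^ j := Nat.le_mul_of_pos_right p (pow_pos hp j)
  rw [Nat.mul_sub_one] at h
  exact Nat.div_eq_of_eq_mul_left hw₀ (by rw [mul_comm]; omega) |>.symm

end Cap

section Admissible

variable {ι : Type*} [Fintype ι] {p : ℕ} {w : ι → ℕ}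

lemma isCarryFree_cap (hp : 0 < p) {s : ℕ} (hs : ∀ j < s, digitSum p w j < p) :
    IsCarryFree p fun i => cap p (w i) s := by
  intro u
  induction u generalizing s with
  | zero => simp [Nat.mod_one]
  | succ u ih =>
    cases s with
    | zero => simp [pow_pos hp]
    | succ s =>
      have hmod : ∀ i, cap p (w i) (s + 1) % p ^ (u + 1) =
          capDigit p (w i) s + p * (cap p (w i) s % p ^ u) := fun i => by
        have hdiv : cap p (w i) (s + 1) / p = cap p (w i) s := by
          simpa using cap_add_div_pow (w := w i) hp s 1
        rw [pow_succ', Nat.mod_mul, hdiv, capDigit]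
      have hlow : ∑ i, cap p (w i) s % p ^ u < p ^ u := ih fun j hj => hs j (by omega)
      replace hlow := Nat.mul_le_mul_left p (Nat.succ_le_of_lt hlow)
      have htop := hs s (Nat.lt_succ_self s)
      rw [digitSum] at htop
      rw [Nat.mul_succ, ← pow_succ'] at hlow
      simp only [hmod, sum_add_distrib, ← mul_sum]
      omega

lemma sum_add_one_le_of_sum_mod_lt (hp : 0 < p) {κ : ι → ℕ} {s σ : ℕ}
    (hκ : ∑ i, κ i % p ^ σ < p ^ σ) (hcap : ∀ i, κ i ≤ cap p (w i) (s + σ)) :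
    ∑ i, κ i + 1 ≤ p ^ σ * (∑ i, cap p (w i) s + 1) := by
  have hdiv : ∑ i, κ i / p ^ σ ≤ ∑ i, cap p (w i) s := sum_le_sum fun i _ =>
    cap_add_div_pow hp s σ ▸ Nat.div_le_div_right (hcap i)
  calc ∑ i, κ i + 1 = p ^ σ * ∑ i, κ i / p ^ σ + (∑ i, κ i % p ^ σ + 1) := by
        rw [mul_sum, ← add_assoc, ← sum_add_distrib]
        simp only [Nat.div_add_mod]
    _ ≤ p ^ σ * ∑ i, cap p (w i) s + p ^ σ := by gcongr; omega
    _ = p ^ σ * (∑ i, cap p (w i) s + 1) := by ring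

def admissibleSums (p : ℕ) (w : ι → ℕ) (e : ℕ) : Set ℕ :=
  {N | ∃ κ : ι → ℕ, ∑ i, κ i = N ∧ (∀ i, κ i ≤ cap p (w i) e) ∧ IsCarryFree p κ}

lemma isGreatest_admissibleSums_of_digitSum_lt (hp : 0 < p) {e : ℕ}
    (h : ∀ j < e, digitSum p w j < p) :
    IsGreatest (admissibleSums p w e) (∑ i, cap p (w i) e) :=
  ⟨⟨_, rfl, fun _ => le_rfl, isCarryFree_cap hp h⟩,
    by rintro _ ⟨κ, rfl, hκ, -⟩; exact sum_le_sum fun i _ => hκ i⟩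

lemma exists_le_sum_eq {α : Type*} (s : Finset α) (ℓ : α → ℕ) {N : ℕ}
    (h : N ≤ ∑ i ∈ s, ℓ i) : ∃ δ ≤ ℓ, ∑ i ∈ s, δ i = N := by
  classical
  induction s using Finset.cons_induction generalizing N with
  | empty => exact ⟨0, fun _ => Nat.zero_le _, by rw [sum_empty] at h ⊢; omega⟩
  | cons a s ha ih =>
    rw [sum_cons] at h
    obtain ⟨δ, hδ, hsum⟩ := ih (N := N - min (ℓ a) N) (by omega)
    refine ⟨Function.update δ a (min (ℓ a) N), fun i => ?_, ?_⟩
    · rcases eq_or_ne i a with rfl | hi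
      · simp
      · simpa [hi] using hδ i
    · rw [sum_cons, Function.update_self, sum_congr rfl fun i hi =>
        Function.update_of_ne (ne_of_mem_of_not_mem hi ha) _ _, hsum]
      omega

/-- At the first place `s` where the digit sum reaches `p`, keep all digits of the caps above `s`,
lower some digits at `s` to make them sum to `p - 1`, and fill the `σ` places below `s` with the
digit `p - 1` in a coordinate `i₀` whose digit at `s` was lowered. -/
lemma exists_isCarryFree_of_overflow (hp : 0 < p) {s : ℕ} (hs : ∀ j < s, digitSum p w j < p)
    (hover : p ≤ digitSum p w s) (σ : ℕ) :
    ∃ κ : ι → ℕ, ∑ i, κ i + 1 = p ^ (σ + 1) * (∑ i, cap p (w i) s + 1) ∧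
      (∀ i, κ i ≤ cap p (w i) (s + (σ + 1))) ∧ IsCarryFree p κ := by
  classical
  rw [digitSum] at hover
  obtain ⟨δ, hδ, hδsum⟩ := exists_le_sum_eq univ (fun i => capDigit p (w i) s) (N := p - 1)
    (by omega)
  obtain ⟨i₀, hi₀⟩ : ∃ i₀, δ i₀ < capDigit p (w i₀) s := by
    by_contra! h
    have : ∑ i, capDigit p (w i) s ≤ ∑ i, δ i := sum_le_sum fun i _ => h i
    omega
  set low : ι → ℕ := fun i => p ^ σ * δ i + (Pi.single i₀ (p ^ σ - 1) : ι → ℕ) i with hlow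
  have hpσ : 1 ≤ p ^ σ := Nat.one_le_pow _ _ hp
  have hlow_sum : ∑ i, low i + 1 = p ^ (σ + 1) := by
    simp only [hlow, sum_add_distrib, ← mul_sum, hδsum, sum_pi_single', mem_univ, if_true]
    rw [pow_succ, Nat.mul_sub_one]
    have : p ^ σ ≤ p ^ σ * p := Nat.le_mul_of_pos_right _ hp
    omega
  have hlow_le : ∀ i, low i ≤ p ^ σ * capDigit p (w i) s := fun i => by
    rcases eq_or_ne i i₀ with rfl | hi
    · have := Nat.mul_le_mul_left (p ^ σ) (Nat.succ_le_of_lt hi₀)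
      simp only [hlow, Pi.single_eq_same]
      rw [Nat.mul_succ] at this
      omega
    · simpa [hlow, hi] using Nat.mul_le_mul_left (p ^ σ) (hδ i)
  refine ⟨fun i => p ^ (σ + 1) * cap p (w i) s + low i, ?_, fun i => ?_, ?_⟩
  · rw [sum_add_distrib, ← mul_sum, add_assoc, hlow_sum]
    ring
  · calc p ^ (σ + 1) * cap p (w i) s + low i
        ≤ p ^ σ * (p * cap p (w i) s + capDigit p (w i) s) := by
          rw [mul_add, pow_succ, mul_assoc]
          exact Nat.add_le_add_left (hlow_le i) _
      _ = p ^ σ * cap p (w i) (s + 1) := by rw [cap_succ hp]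
      _ ≤ cap p (w i) (s + (σ + 1)) := by
          rw [show s + (σ + 1) = s + 1 + σ by ring]
          exact pow_mul_cap_le hp _ _
  · refine (isCarryFree_cap hp hs).pow_mul_add ?_ (by omega)
    exact (isCarryFree_of_sum_lt (by omega)).pow_mul_add (isCarryFree_single hp i₀ _)
      (by simp only [sum_pi_single', mem_univ, if_true]; omega)

end Admissible

section FrobeniusPower

variable {k : Type*} [CommRing k] {m : ℕ}

lemma coeff_eq_zero_of_mem_frobeniusPower {q : ℕ} {g : MvPolynomial (Fin m) k}
    (hg : g ∈ frobeniusPower k m q) {μ : Fin m →₀ ℕ} (hμ : ∀ i, μ i < q) : coeff μ g = 0 := by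
  obtain ⟨c, rfl⟩ := Ideal.mem_span_range_iff_exists_fun.mp hg
  rw [coeff_sum]
  refine sum_eq_zero fun i _ => ?_
  rw [X_pow_eq_monomial, coeff_mul_monomial', if_neg]
  intro hle
  exact (hμ i).not_ge (by simpa using hle i)

lemma monomial_mem_frobeniusPower {q : ℕ} {μ : Fin m →₀ ℕ} {i : Fin m} (hi : q ≤ μ i) (c : k) :
    monomial μ c ∈ frobeniusPower k m q :=
  Ideal.mem_of_dvd (a := X i ^ q) _
    (by rw [X_pow_eq_monomial, monomial_dvd_monomial, Finsupp.single_le_iff]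
        exact ⟨Or.inr hi, one_dvd c⟩)
    (Ideal.subset_span ⟨i, rfl⟩)

lemma sum_X_pow_pow (w : Fin m → ℕ) (N : ℕ) :
    (∑ i, X i ^ w i : MvPolynomial (Fin m) k) ^ N = ∑ κ ∈ piAntidiag univ N,
      monomial (Finsupp.equivFunOnFinite.symm fun i => w i * κ i) (Nat.multinomial univ κ : k) := by
  rw [sum_pow_eq_sum_piAntidiag]
  refine sum_congr rfl fun κ _ => ?_
  rw [monomial_eq, Finsupp.prod_fintype _ _ fun _ => pow_zero _, map_natCast]
  simp [pow_mul]

lemma pow_notMem_frobeniusPower_iff (p : ℕ) [CharP k p] {w : Fin m → ℕ} (hw : ∀ i, 0 < w i)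
    (q N : ℕ) :
    (∑ i, X i ^ w i : MvPolynomial (Fin m) k) ^ N ∉ frobeniusPower k m q ↔
      ∃ κ : Fin m → ℕ, ∑ i, κ i = N ∧ (∀ i, w i * κ i < q) ∧ ¬ p ∣ Nat.multinomial univ κ := by
  rw [sum_X_pow_pow]
  constructor
  · intro hnot
    by_contra! hall
    refine hnot (Ideal.sum_mem _ fun κ hκ => ?_)
    by_cases hcap : ∀ i, w i * κ i < q
    · rw [(CharP.cast_eq_zero_iff k p _).2 (hall κ (mem_piAntidiag.1 hκ).1 hcap), map_zero]
      exact Ideal.zero_mem _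
    · obtain ⟨i, hi⟩ := not_forall.1 hcap
      exact monomial_mem_frobeniusPower (i := i) (by simpa using hi) _
  · rintro ⟨κ, hsum, hcap, hndvd⟩ hmem
    have hcoeff := coeff_eq_zero_of_mem_frobeniusPower hmem
      (μ := Finsupp.equivFunOnFinite.symm fun i => w i * κ i) (by simpa using hcap)
    rw [coeff_sum, sum_eq_single κ, coeff_monomial, if_pos rfl] at hcoeff
    · exact hndvd ((CharP.cast_eq_zero_iff k p _).1 hcoeff)
    · intro κ' _ hne
      rw [coeff_monomial, if_neg]
      intro heq
      refine hne (funext fun i => Nat.eq_of_mul_eq_mul_left (hw i) ?_)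
      simpa using DFunLike.congr_fun heq i
    · intro hκ
      exact absurd (mem_piAntidiag.2 ⟨hsum, fun i _ => mem_univ i⟩) hκ

variable {p : ℕ} [CharP k p]

lemma nu_sum_X_pow (hp : p.Prime) {w : Fin m → ℕ} (hw : ∀ i, 0 < w i) (e : ℕ) :
    nu (∑ i, X i ^ w i : MvPolynomial (Fin m) k) (p ^ e) = sSup (admissibleSums p w e) := by
  rw [nu]
  congr 1
  ext N
  simp only [Set.mem_ofPred_eq, pow_notMem_frobeniusPower_iff p hw,
    mul_lt_pow_iff_le_cap hp.pos (hw _), hp.not_dvd_multinomial_iff, admissibleSums, IsCarryFree]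

lemma nu_eq_sum_cap (hp : p.Prime) {w : Fin m → ℕ} (hw : ∀ i, 0 < w i) {e : ℕ}
    (h : ∀ j < e, digitSum p w j < p) :
    nu (∑ i, X i ^ w i : MvPolynomial (Fin m) k) (p ^ e) = ∑ i, cap p (w i) e := by
  rw [nu_sum_X_pow hp hw, (isGreatest_admissibleSums_of_digitSum_lt hp.pos h).csSup_eq]

lemma nu_add_one_eq_of_overflow (hp : p.Prime) {w : Fin m → ℕ} (hw : ∀ i, 0 < w i) {s : ℕ}
    (hs : ∀ j < s, digitSum p w j < p) (hover : p ≤ digitSum p w s) (σ : ℕ) :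
    nu (∑ i, X i ^ w i : MvPolynomial (Fin m) k) (p ^ (s + (σ + 1))) + 1 =
      p ^ (σ + 1) * (∑ i, cap p (w i) s + 1) := by
  obtain ⟨κ, hsum, hcap, hκ⟩ := exists_isCarryFree_of_overflow hp.pos hs hover σ
  have hgreatest : IsGreatest (admissibleSums p w (s + (σ + 1))) (∑ i, κ i) := by
    refine ⟨⟨κ, rfl, hcap, hκ⟩, ?_⟩
    rintro _ ⟨κ', rfl, hcap', hκ'⟩
    have := sum_add_one_le_of_sum_mod_lt hp.pos (hκ' (σ + 1)) hcap'
    omega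
  rw [nu_sum_X_pow hp hw, hgreatest.csSup_eq, hsum]

end FrobeniusPower

section Valuation

variable {ι : Type*} [Fintype ι] {p : ℕ} {w : ι → ℕ}

lemma sum_cap_succ_add_one (hp : 0 < p) {j : ℕ} (hj : digitSum p w j < p) :
    (∑ i, cap p (w i) (j + 1) + 1) + (p - 1 - digitSum p w j) = p * (∑ i, cap p (w i) j + 1) := by
  simp only [digitSum] at hj ⊢
  simp only [cap_succ hp, sum_add_distrib, ← mul_sum]
  rw [Nat.mul_succ]
  omega

lemma not_dvd_sum_cap_succ_add_one (hp : 0 < p) {j : ℕ} (hj : digitSum p w j < p - 1) :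
    ¬ p ∣ ∑ i, cap p (w i) (j + 1) + 1 := fun hdvd => by
  have hrec := sum_cap_succ_add_one (w := w) hp (j := j) (by omega)
  have : p ∣ p - 1 - digitSum p w j := (Nat.dvd_add_right hdvd).1 (hrec ▸ dvd_mul_right _ _)
  have := Nat.le_of_dvd (by omega) this
  omega

lemma padicValNat_sum_cap_add_one_add_le [hp : Fact p.Prime] {d s : ℕ} (hds : d ≤ s)
    (hs : ∀ j < s, digitSum p w j < p) (hd : ∀ j < d, digitSum p w j < p - 1) :
    padicValNat p (∑ i, cap p (w i) s + 1) + d ≤ s := by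
  have hp₀ := hp.out.pos
  induction s, hds using Nat.le_induction with
  | base =>
    suffices padicValNat p (∑ i, cap p (w i) d + 1) = 0 by omega
    rcases d with _ | d
    · simp
    · exact padicValNat.eq_zero_of_not_dvd (not_dvd_sum_cap_succ_add_one hp₀ (hd d d.lt_succ_self))
  | succ s hds ih =>
    have hs' := hs s s.lt_succ_self
    rcases (Nat.le_sub_one_of_lt hs').lt_or_eq with hlt | heq
    · rw [padicValNat.eq_zero_of_not_dvd (not_dvd_sum_cap_succ_add_one hp₀ hlt)]
      omega
    · have hrec := sum_cap_succ_add_one hp₀ hs'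
      rw [heq, Nat.sub_self, add_zero] at hrec
      rw [hrec, padicValNat.mul hp.out.ne_zero (Nat.add_one_ne_zero _), padicValNat_self]
      have := ih fun j hj => hs j (by omega)
      omega

end Valuation

section Limits

open Topology

variable {p : ℕ}

lemma tendsto_inv_pow_atTop_zero (hp : 1 < p) :
    Tendsto (fun e : ℕ => ((p : ℝ) ^ e)⁻¹) atTop (𝓝 0) :=
  tendsto_inv_atTop_zero.comp (tendsto_pow_atTop_atTop_of_one_lt (by exact_mod_cast hp))

lemma tendsto_cap_div_pow (hp : 1 < p) {w : ℕ} (hw : 0 < w) :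
    Tendsto (fun e => (cap p w e : ℝ) / (p : ℝ) ^ e) atTop (𝓝 (1 / w)) := by
  have hlower : Tendsto (fun e : ℕ => 1 / (w : ℝ) - ((p : ℝ) ^ e)⁻¹) atTop (𝓝 (1 / w)) := by
    simpa using tendsto_const_nhds.sub (tendsto_inv_pow_atTop_zero hp)
  refine tendsto_of_tendsto_of_tendsto_of_le_of_le hlower tendsto_const_nhds (fun e => ?_)
    fun e => ?_
  · have hP : (0 : ℝ) < p ^ e := by positivity
    have hle : p ^ e ≤ w * (cap p w e + 1) := by
      have := Nat.lt_mul_div_succ (p ^ e - 1) hw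
      rw [← cap] at this
      omega
    have : 1 / (w : ℝ) ≤ (cap p w e + 1) / p ^ e := by
      rw [div_le_div_iff₀ (by positivity) hP]
      exact_mod_cast (by linarith [hle] : 1 * p ^ e ≤ (cap p w e + 1) * w)
    rw [add_div, one_div ((p : ℝ) ^ e)] at this
    dsimp only
    linarith
  · have hle : cap p w e * w ≤ p ^ e := by
      have := Nat.mul_div_le (p ^ e - 1) w
      rw [← cap] at this
      rw [mul_comm]
      omega
    dsimp only
    rw [div_le_div_iff₀ (by positivity) (by positivity), one_mul]
    exact_mod_cast hle

lemma tendsto_div_pow_of_add_one_eq (hp : 1 < p) {g : ℕ → ℕ} {s K : ℕ}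
    (h : ∀ σ, g (s + (σ + 1)) + 1 = p ^ (σ + 1) * K) :
    Tendsto (fun e => (g e : ℝ) / (p : ℝ) ^ e) atTop (𝓝 (K / (p : ℝ) ^ s)) := by
  refine (by simpa using tendsto_const_nhds.sub (tendsto_inv_pow_atTop_zero hp) :
    Tendsto (fun e : ℕ => (K : ℝ) / p ^ s - ((p : ℝ) ^ e)⁻¹) atTop (𝓝 (K / p ^ s))).congr' ?_
  filter_upwards [eventually_gt_atTop s] with e he
  obtain ⟨σ, rfl⟩ : ∃ σ, e = s + (σ + 1) := ⟨e - s - 1, by omega⟩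
  have hg : (g (s + (σ + 1)) : ℝ) = p ^ (σ + 1) * K - 1 := by
    rw [eq_sub_iff_add_eq]
    exact_mod_cast h σ
  have : (p : ℝ) ≠ 0 := by positivity
  rw [hg, pow_add]
  field_simp

lemma tendsto_nu_div_pow_of_digitSum_lt {k : Type*} [CommRing k] [CharP k p] (hp : p.Prime)
    {m : ℕ} {w : Fin m → ℕ} (hw : ∀ i, 0 < w i) (h : ∀ j, digitSum p w j < p) :
    Tendsto (fun e => (nu (∑ i, X i ^ w i : MvPolynomial (Fin m) k) (p ^ e) : ℝ) / (p : ℝ) ^ e)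
      atTop (𝓝 (∑ i, 1 / (w i : ℝ))) := by
  simp only [nu_eq_sum_cap hp hw fun j _ => h j, Nat.cast_sum, sum_div]
  exact tendsto_finsetSum _ fun i _ => tendsto_cap_div_pow hp.one_lt (hw i)

lemma eq_sum_inv_or_exists_eq_div_pow {k : Type*} [CommRing k] [CharP k p] (hp : p.Prime)
    {m : ℕ} {w : Fin m → ℕ} (hw : ∀ i, 0 < w i) {F : ℝ}
    (hF : Tendsto (fun e => (nu (∑ i, X i ^ w i : MvPolynomial (Fin m) k) (p ^ e) : ℝ) /
      (p : ℝ) ^ e) atTop (𝓝 F)) :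
    F = ∑ i, 1 / (w i : ℝ) ∨ ∃ s, (∀ j < s, digitSum p w j < p) ∧ p ≤ digitSum p w s ∧
      F = ((∑ i, cap p (w i) s + 1 : ℕ) : ℝ) / (p : ℝ) ^ s := by
  classical
  by_cases hA : ∀ j, digitSum p w j < p
  · exact Or.inl (tendsto_nhds_unique hF (tendsto_nu_div_pow_of_digitSum_lt hp hw hA))
  push Not at hA
  have hs : ∀ j < Nat.find hA, digitSum p w j < p := fun j hj => not_le.1 (Nat.find_min hA hj)
  refine Or.inr ⟨Nat.find hA, hs, Nat.find_spec hA, tendsto_nhds_unique hF ?_⟩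
  exact tendsto_div_pow_of_add_one_eq hp.one_lt
    (g := fun e => nu (∑ i, X i ^ w i : MvPolynomial (Fin m) k) (p ^ e))
    (nu_add_one_eq_of_overflow hp hw hs (Nat.find_spec hA))

end Limits

lemma sum_fin_apply_ite {M : Type*} [AddCommMonoid M] {m : ℕ} (hm : 2 ≤ m) (g : ℕ → M)
    (a b n : ℕ) :
    ∑ i : Fin m, g (if (i : ℕ) = 0 then a else if (i : ℕ) = 1 then b else n) =
      g a + g b + (m - 2) • g n := by
  obtain ⟨m, rfl⟩ : ∃ m', m = m' + 2 := ⟨m - 2, by omega⟩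
  simp [Fin.sum_univ_succ, add_assoc]

lemma digitSum_ite_lt_sub_one {p m a b n d j : ℕ} (hp : 1 < p) (hm : 2 ≤ m) (ha : 2 ≤ a)
    (hb : 3 ≤ b) (hap : a ∣ p - 1) (hbp : b ∣ p - 1) (hdn : p ^ d ≤ n) (hj : j < d) :
    digitSum p (fun i : Fin m => if (i : ℕ) = 0 then a else if (i : ℕ) = 1 then b else n) j <
      p - 1 := by
  have hp₀ : 0 < p := by omega
  rw [digitSum, sum_fin_apply_ite (g := fun w => capDigit p w j) hm, capDigit_of_dvd hp₀ hap,
    capDigit_of_dvd hp₀ hbp, capDigit, cap_eq_zero ((Nat.pow_le_pow_right hp₀ hj).trans hdn),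
    Nat.zero_mod, smul_zero, add_zero]
  have := Nat.div_le_div_left (a := p - 1) ha two_pos
  have := Nat.div_le_div_left (a := p - 1) hb three_pos
  omega

lemma le_padicValNat_den_of_eq_div {p : ℕ} [hp : Fact p.Prime] {F : ℚ} {K s d : ℕ} (hK : K ≠ 0)
    (hF : F = K / p ^ s) (h : padicValNat p K + d ≤ s) : d ≤ padicValNat p F.den := by
  have hv : padicValRat p F = padicValNat p K - s := by
    rw [hF, padicValRat.div (by exact_mod_cast hK)
      (pow_ne_zero _ (by exact_mod_cast hp.out.ne_zero)), padicValRat.of_nat, padicValRat.pow _,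
      padicValRat.self hp.out.one_lt, mul_one]
  rw [padicValRat_def] at hv
  omega

end DiagonalFPT

open DiagonalFPT in
theorem stmt3_general {p m n a b d : ℕ} (hp : p.Prime) {k : Type*} [Field k]
    [CharP k p] (hm : 2 < m)
    (ha : 1 < a) (hab : a ≤ b) (hne : ¬(a = 2 ∧ b = 2))
    (hpmod : (p : ℤ) ≡ 1 [ZMOD (Nat.lcm a b : ℤ)])
    (hdn : p ^ d ≤ n)
    (F : ℚ)
    (hF : Tendsto (fun e : ℕ =>
        (nu (∑ i : Fin m, (X i : MvPolynomial (Fin m) k) ^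
            (if (i : ℕ) = 0 then a else if (i : ℕ) = 1 then b else n)) (p ^ (e + 1)) : ℝ) /
          (p : ℝ) ^ (e + 1))
      atTop (nhds (F : ℝ)))
    (hFne : F ≠ 1 / (a : ℚ) + 1 / (b : ℚ) + ((m : ℚ) - 2) / (n : ℚ)) :
    d ≤ padicValNat p F.den := by
  have := Fact.mk hp
  set w : Fin m → ℕ := fun i => if (i : ℕ) = 0 then a else if (i : ℕ) = 1 then b else n
  have hw : ∀ i, 0 < w i := fun i => by
    have := (pow_pos hp.pos d).trans_le hdn
    simp only [w]
    split_ifs <;> omega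
  have hlcm : Nat.lcm a b ∣ p - 1 := by
    rw [← Int.natCast_dvd_natCast, Nat.cast_sub hp.one_le]
    exact hpmod.symm.dvd
  have hlow : ∀ j < d, digitSum p w j < p - 1 := fun j =>
    digitSum_ite_lt_sub_one hp.one_lt hm.le ha (by omega) ((Nat.dvd_lcm_left a b).trans hlcm)
      ((Nat.dvd_lcm_right a b).trans hlcm) hdn
  rcases eq_sum_inv_or_exists_eq_div_pow (k := k) hp hw
    ((tendsto_add_atTop_iff_nat (f := fun e => (nu (∑ i, X i ^ w i : MvPolynomial (Fin m) k)
      (p ^ e) : ℝ) / (p : ℝ) ^ e) 1).1 hF) with hF | ⟨s, hs, hover, hFs⟩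
  · refine absurd ?_ hFne
    rw [sum_fin_apply_ite (g := fun w : ℕ => 1 / (w : ℝ)) hm.le, nsmul_eq_mul,
      Nat.cast_sub hm.le] at hF
    rw [← Rat.cast_inj (α := ℝ), hF]
    push_cast
    ring
  · have hds : d ≤ s := not_lt.1 fun h => (hlow s h).not_ge (hover.trans' (Nat.sub_le _ _))
    exact le_padicValNat_den_of_eq_div (Nat.add_one_ne_zero _)
      (by rw [← Rat.cast_inj (α := ℝ), hFs]; push_cast; rfl)
      (padicValNat_sum_cap_add_one_add_le hds hs hlow)

/-- Theorem (unbounded denominators): for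
`f_n = x_1^a + x_2^b + x_3^n + … + x_m^n`, if `p ≡ 1 (mod lcm(a,b))`,
`p^d ≤ n < p^{d+1}` with `d ≥ 1`, and `fpt(f_n) ≠ 1/a + 1/b + (m-2)/n`, then the
power of `p` in the denominator of `fpt(f_n)` (in lowest terms) is at least `d`.
Here `F = fpt(f_n)` is characterized as the limit of `ν_{f_n}(p^e)/p^e`. -/
theorem stmt3 {p m n a b d : ℕ} (hp : p.Prime) {k : Type*} [Field k] [PerfectField k]
    [CharP k p] (hm : 2 < m)
    (ha : 1 < a) (hab : a ≤ b) (hne : ¬(a = 2 ∧ b = 2)) (hn : b ≤ n)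
    (hpmod : (p : ℤ) ≡ 1 [ZMOD (Nat.lcm a b : ℤ)])
    (hd : 0 < d) (hdn : p ^ d ≤ n) (hnd : n < p ^ (d + 1))
    (F : ℚ)
    (hF : Tendsto (fun e : ℕ =>
        (nu (∑ i : Fin m, (X i : MvPolynomial (Fin m) k) ^
            (if (i : ℕ) = 0 then a else if (i : ℕ) = 1 then b else n)) (p ^ (e + 1)) : ℝ) /
          (p : ℝ) ^ (e + 1))
      atTop (nhds (F : ℝ)))
    (hFne : F ≠ 1 / (a : ℚ) + 1 / (b : ℚ) + ((m : ℚ) - 2) / (n : ℚ)) :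
    d ≤ padicValNat p F.den :=
  stmt3_general hp hm ha hab hne hpmod hdn F hF hFne
end
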